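/- arXiv:1402.4322 — 3 statements merged into one kernel-verified Lean document; each statement's English description precedes it below -/
import Mathlib

section
/- SL(α) and SL*(α) are permutation invariant: if φ: (X,d) → (X',d') is a bijective isometry between finite metric spaces, then the associated ultrametrics satisfy u_α^{X'}(φ(x),φ(y)) = u_α^{X}(x,y) and (u*_α)^{X'}(φ(x),φ(y)) = (u*_α)^{X}(x,y) for all x,y ∈ X and every α > 0. -/
open Relation

def IsMetric {X : Type} (d : X → X → ℝ) : Prop :=
  (∀ x y, 0 ≤ d x y) ∧ (∀ x y, d x y = 0 ↔ x = y) ∧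
  (∀ x y, d x y = d y x) ∧ (∀ x y z, d x z ≤ d x y + d y z)

def IsUltrametric {X : Type} (d : X → X → ℝ) : Prop :=
  IsMetric d ∧ ∀ x y z, d x z ≤ max (d x y) (d y z)

/-- dimension of the Vietoris–Rips complex of `Y ⊆ X` at scale `t`:
(max cardinality of a subset of `Y` with pairwise distances ≤ t) − 1. -/
noncomputable def dimF {X : Type} (d : X → X → ℝ) (t : ℝ) (Y : Set X) : ℝ :=
  sSup { v : ℝ | ∃ S : Finset X, ↑S ⊆ Y ∧ (∀ s ∈ S, ∀ s' ∈ S, d s s' ≤ t) ∧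
    v = (S.card : ℝ) - 1 }

/-- the edge condition of the graph `G_α^t` on the blocks of the partition `P`. -/
def IsEdge {X : Type} (d : X → X → ℝ) (α t : ℝ) (P : Set (Set X)) (B B' : Set X) : Prop :=
  B ∈ P ∧ B' ∈ P ∧ B ≠ B' ∧
  (∃ x ∈ B, ∃ y ∈ B', d x y ≤ t) ∧
  (∃ S : Finset X, ↑S ⊆ B ∪ B' ∧ (∃ s ∈ S, s ∈ B) ∧ (∃ s ∈ S, s ∈ B') ∧
    (∀ s ∈ S, ∀ s' ∈ S, d s s' ≤ t) ∧
    min (dimF d t B) (dimF d t B') ≤ α * ((S.card : ℝ) - 1))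

/-- `B` and `B'` lie in the same connected component of `G_α^t`. -/
def SameComp {X : Type} (d : X → X → ℝ) (α t : ℝ) (P : Set (Set X)) (B B' : Set X) : Prop :=
  ReflTransGen (IsEdge d α t P) B B'

/-- SL(α) merging rule: merge the blocks of each connected component of `G_α^t`. -/
def mergeStep {X : Type} (d : X → X → ℝ) (α t : ℝ) (P : Set (Set X)) : Set (Set X) :=
  { C | ∃ B ∈ P, C = ⋃₀ { B' | B' ∈ P ∧ SameComp d α t P B B' } }

/-- the partition of `X` into singletons. -/
def singletons (X : Type) : Set (Set X) := { C | ∃ x : X, C = {x} }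

/-- the sorted list of values taken by `d` that are at most `t`. -/
noncomputable def distVals {X : Type} [Fintype X] (d : X → X → ℝ) (t : ℝ) : List ℝ :=
  ((Finset.image (fun p : X × X => d p.1 p.2) Finset.univ).filter (· ≤ t)).sort (· ≤ ·)

/-- the dendrogram of SL(α): fold the merging rule over the distance values ≤ t. -/
noncomputable def theta {X : Type} [Fintype X] (d : X → X → ℝ) (α : ℝ) (t : ℝ) :
    Set (Set X) :=
  (distVals d t).foldl (fun P s => mergeStep d α s P) (singletons X)

/-- the ultrametric associated to SL(α). -/
noncomputable def uAlpha {X : Type} [Fintype X] (d : X → X → ℝ) (α : ℝ) (x y : X) : ℝ :=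
  sInf { t : ℝ | 0 ≤ t ∧ ∃ B ∈ theta d α t, x ∈ B ∧ y ∈ B }

/-- `B` is a big block of its connected component `A` of `G_α^t`:
`α·#B ≥ max_{B' ∈ A} #B'`. -/
def IsBig {X : Type} (d : X → X → ℝ) (α t : ℝ) (P : Set (Set X)) (B : Set X) : Prop :=
  B ∈ P ∧ ∀ B', B' ∈ P → SameComp d α t P B B' → (B'.ncard : ℝ) ≤ α * (B.ncard : ℝ)

/-- `B, B'` lie in the same connected component of the subgraph `H_α(A)` of big blocks. -/
def HConn {X : Type} (d : X → X → ℝ) (α t : ℝ) (P : Set (Set X)) (B B' : Set X) : Prop :=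
  ReflTransGen (fun C C' => IsEdge d α t P C C' ∧ IsBig d α t P C ∧ IsBig d α t P C') B B'

/-- `B, B'` lie in the same connected component of the subgraph `S_α(A)` of small blocks. -/
def SConn {X : Type} (d : X → X → ℝ) (α t : ℝ) (P : Set (Set X)) (B B' : Set X) : Prop :=
  ReflTransGen (fun C C' => IsEdge d α t P C C' ∧ ¬ IsBig d α t P C ∧ ¬ IsBig d α t P C')
    B B'

/-- the SL*(α) relation between blocks of a common connected component `A` of `G_α^t`:
either both lie in the same component of `H_α(A)`, or `B` is big, `B'` is small,
and no big block of `A` outside the `H_α(A)`-component of `B` is adjacent to any block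
of the `S_α(A)`-component of `B'`. -/
def StarRel {X : Type} (d : X → X → ℝ) (α t : ℝ) (P : Set (Set X)) (B B' : Set X) : Prop :=
  B ∈ P ∧ B' ∈ P ∧ SameComp d α t P B B' ∧
  ((IsBig d α t P B ∧ IsBig d α t P B' ∧ HConn d α t P B B') ∨
   (IsBig d α t P B ∧ ¬ IsBig d α t P B' ∧
     ∀ D, D ∈ P → SameComp d α t P B D → IsBig d α t P D → ¬ HConn d α t P B D →
       ∀ E, E ∈ P → ¬ IsBig d α t P E → SConn d α t P B' E → ¬ IsEdge d α t P D E))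

/-- SL*(α) merging rule: merge blocks according to the equivalence relation generated
by `StarRel`. -/
def mergeStepStar {X : Type} (d : X → X → ℝ) (α t : ℝ) (P : Set (Set X)) : Set (Set X) :=
  { C | ∃ B ∈ P, C = ⋃₀ { B' | B' ∈ P ∧ EqvGen (StarRel d α t P) B B' } }

/-- the dendrogram of SL*(α). -/
noncomputable def thetaStar {X : Type} [Fintype X] (d : X → X → ℝ) (α : ℝ) (t : ℝ) :
    Set (Set X) :=
  (distVals d t).foldl (fun P s => mergeStepStar d α s P) (singletons X)

/-- the ultrametric associated to SL*(α). -/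
noncomputable def uStar {X : Type} [Fintype X] (d : X → X → ℝ) (α : ℝ) (x y : X) : ℝ :=
  sInf { t : ℝ | 0 ≤ t ∧ ∃ B ∈ thetaStar d α t, x ∈ B ∧ y ∈ B }

/-- there is a `t`-chain from `x` to `y`. -/
def HasChain {X : Type} (d : X → X → ℝ) (r : ℝ) (x y : X) : Prop :=
  ReflTransGen (fun a b => d a b ≤ r) x y

/-- the single linkage dendrogram: the partition into `t`-chain components. -/
def thetaSL {X : Type} (d : X → X → ℝ) (t : ℝ) : Set (Set X) :=
  { C | ∃ x : X, C = { y | HasChain d t x y } }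

/-- the single linkage ultrametric. -/
noncomputable def uSL {X : Type} (d : X → X → ℝ) (x y : X) : ℝ :=
  sInf { r : ℝ | 0 ≤ r ∧ HasChain d r x y }

/-!
Every ingredient of SL(α) and SL*(α) (Rips cliques and `dimF`, the block graph `G_α^t`, big and
small blocks, the components of `H_α` and `S_α`) is defined from `d` alone, so a bijective isometry
`e` carries each of them for a partition `P` of `X` to the same notion for `e(P)`. Since `d` and
`d'` take the same values, both dendrograms are obtained by folding over the same list of scales,
and induction along it gives `θ'(t) = e(θ(t))`; the ultrametrics are then equal.
-/

open Function in
lemma reflTransGen_congr_equiv {α β : Type*} (e : α ≃ β) {r : α → α → Prop}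
    {r' : β → β → Prop} (h : ∀ a b, r' (e a) (e b) ↔ r a b) {a b : α} :
    ReflTransGen r' (e a) (e b) ↔ ReflTransGen r a b := by
  obtain rfl : r = (r' on e) := by ext a b; exact (h a b).symm
  refine ⟨fun H => ?_, ReflTransGen.lift e (fun _ _ => id) a b⟩
  simpa [onFun] using ReflTransGen.lift e.symm (p := r' on e) (fun x y => by simp [onFun]) _ _ H

lemma eqvGen_congr_equiv {α β : Type*} (e : α ≃ β) {r : α → α → Prop}
    {r' : β → β → Prop} (h : ∀ a b, r' (e a) (e b) ↔ r a b) {a b : α} :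
    EqvGen r' (e a) (e b) ↔ EqvGen r a b := by
  rw [← EqvGen.reflTransGen_symmGen, ← EqvGen.reflTransGen_symmGen]
  exact reflTransGen_congr_equiv e fun a b => or_congr (h a b) (h b a)

lemma exists_finset_map_iff {α β : Type*} (e : α ≃ β) {p : Finset β → Prop} :
    (∃ S, p S) ↔ ∃ S : Finset α, p (S.map e.toEmbedding) :=
  e.finsetCongr.surjective.exists

/-- `mergeStep d α t P` and `mergeStepStar d α t P` are, definitionally, `mergeBy R P` for
`R = SameComp d α t P` and `R = EqvGen (StarRel d α t P)`. -/
def mergeBy {X : Type} (R : Set X → Set X → Prop) (P : Set (Set X)) : Set (Set X) :=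
  { C | ∃ B ∈ P, C = ⋃₀ { B' | B' ∈ P ∧ R B B' } }

section Transport

variable {X X' : Type} {d : X → X → ℝ} {d' : X' → X' → ℝ} (e : X ≃ X')

lemma mergeBy_image {R : Set X → Set X → Prop} {R' : Set X' → Set X' → Prop}
    (h : ∀ B B', R' (e '' B) (e '' B') ↔ R B B') (P : Set (Set X)) :
    mergeBy R' (Set.image e '' P) = Set.image e '' mergeBy R P := by
  have hclass (B : Set X) : ⋃₀ {B' | B' ∈ Set.image e '' P ∧ R' (e '' B) B'} =
      e '' ⋃₀ {B' | B' ∈ P ∧ R B B'} := by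
    rw [Set.image_sUnion]
    congr 1
    ext C
    constructor
    · rintro ⟨⟨B', hB', rfl⟩, hR⟩
      exact ⟨B', ⟨hB', (h B B').1 hR⟩, rfl⟩
    · rintro ⟨B', ⟨hB', hR⟩, rfl⟩
      exact ⟨⟨B', hB', rfl⟩, (h B B').2 hR⟩
  ext C
  constructor
  · rintro ⟨_, ⟨B, hB, rfl⟩, rfl⟩
    exact ⟨_, ⟨B, hB, rfl⟩, (hclass B).symm⟩
  · rintro ⟨_, ⟨B, hB, rfl⟩, rfl⟩
    exact ⟨_, ⟨B, hB, rfl⟩, (hclass B).symm⟩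

lemma singletons_image : Set.image e '' singletons X = singletons X' := by
  ext C
  simp only [singletons, Set.mem_image, Set.mem_ofPred_eq, e.surjective.exists]
  constructor
  · rintro ⟨_, ⟨x, rfl⟩, rfl⟩
    exact ⟨x, Set.image_singleton⟩
  · rintro ⟨x, rfl⟩
    exact ⟨{x}, ⟨x, rfl⟩, Set.image_singleton⟩

lemma exists_image_block_iff (P : Set (Set X)) (x y : X) :
    (∃ B ∈ Set.image e '' P, e x ∈ B ∧ e y ∈ B) ↔ ∃ B ∈ P, x ∈ B ∧ y ∈ B := by
  simp only [Set.exists_mem_image, e.injective.mem_set_image]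


lemma dimF_image (hiso : ∀ x y, d' (e x) (e y) = d x y) (t : ℝ) (B : Set X) :
    dimF d' t (e '' B) = dimF d t B := by
  simp only [dimF, exists_finset_map_iff e, Finset.coe_map, Equiv.coe_toEmbedding,
    Set.image_subset_image_iff e.injective, Finset.forall_mem_map, hiso, Finset.card_map]

variable (α t : ℝ) (P : Set (Set X))

lemma isEdge_image_iff (hiso : ∀ x y, d' (e x) (e y) = d x y) (B B' : Set X) :
    IsEdge d' α t (Set.image e '' P) (e '' B) (e '' B') ↔ IsEdge d α t P B B' := by
  simp only [IsEdge, exists_finset_map_iff e, Finset.coe_map, Equiv.coe_toEmbedding,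
    ← Set.image_union, Set.image_subset_image_iff e.injective, Finset.mem_map,
    exists_exists_and_eq_and, hiso, Finset.card_map, Set.exists_mem_image,
    e.injective.mem_set_image, dimF_image e hiso, e.injective.image_injective.mem_set_image,
    e.injective.image_injective.ne_iff,
    forall_exists_index, and_imp, forall_apply_eq_imp_iff₂]

lemma sameComp_image_iff (hiso : ∀ x y, d' (e x) (e y) = d x y) (B B' : Set X) :
    SameComp d' α t (Set.image e '' P) (e '' B) (e '' B') ↔ SameComp d α t P B B' :=
  reflTransGen_congr_equiv (Equiv.Set.congr e) (isEdge_image_iff e α t P hiso)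

lemma isBig_image_iff (hiso : ∀ x y, d' (e x) (e y) = d x y) (B : Set X) :
    IsBig d' α t (Set.image e '' P) (e '' B) ↔ IsBig d α t P B := by
  simp only [IsBig, Set.forall_mem_image, sameComp_image_iff e α t P hiso,
    Set.ncard_image_of_injective _ e.injective,
    e.injective.image_injective.mem_set_image]

lemma hConn_image_iff (hiso : ∀ x y, d' (e x) (e y) = d x y) (B B' : Set X) :
    HConn d' α t (Set.image e '' P) (e '' B) (e '' B') ↔ HConn d α t P B B' :=
  reflTransGen_congr_equiv (Equiv.Set.congr e) fun C C' =>
    and_congr (isEdge_image_iff e α t P hiso C C')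
      (and_congr (isBig_image_iff e α t P hiso C) (isBig_image_iff e α t P hiso C'))

lemma sConn_image_iff (hiso : ∀ x y, d' (e x) (e y) = d x y) (B B' : Set X) :
    SConn d' α t (Set.image e '' P) (e '' B) (e '' B') ↔ SConn d α t P B B' :=
  reflTransGen_congr_equiv (Equiv.Set.congr e) fun C C' =>
    and_congr (isEdge_image_iff e α t P hiso C C')
      (and_congr (not_congr (isBig_image_iff e α t P hiso C))
        (not_congr (isBig_image_iff e α t P hiso C')))

lemma starRel_image_iff (hiso : ∀ x y, d' (e x) (e y) = d x y) (B B' : Set X) :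
    StarRel d' α t (Set.image e '' P) (e '' B) (e '' B') ↔ StarRel d α t P B B' := by
  simp only [StarRel, Set.forall_mem_image, isEdge_image_iff e α t P hiso,
    sameComp_image_iff e α t P hiso, isBig_image_iff e α t P hiso,
    hConn_image_iff e α t P hiso, sConn_image_iff e α t P hiso,
    e.injective.image_injective.mem_set_image]

lemma mergeStep_image (hiso : ∀ x y, d' (e x) (e y) = d x y) :
    mergeStep d' α t (Set.image e '' P) = Set.image e '' mergeStep d α t P :=
  mergeBy_image e (sameComp_image_iff e α t P hiso) P

lemma mergeStepStar_image (hiso : ∀ x y, d' (e x) (e y) = d x y) :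
    mergeStepStar d' α t (Set.image e '' P) = Set.image e '' mergeStepStar d α t P :=
  mergeBy_image e (fun _ _ => eqvGen_congr_equiv (Equiv.Set.congr e)
    (starRel_image_iff e α t P hiso)) P

end Transport

section Dendrogram

variable {X X' : Type} [Fintype X] [Fintype X'] {d : X → X → ℝ} {d' : X' → X' → ℝ}
  (e : X ≃ X')

lemma distVals_congr (hiso : ∀ x y, d' (e x) (e y) = d x y) (t : ℝ) :
    distVals d' t = distVals d t := by
  have hvals : Finset.univ.image (fun p : X' × X' => d' p.1 p.2) =
      Finset.univ.image (fun p : X × X => d p.1 p.2) := by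
    ext v
    simp only [Finset.mem_image, Finset.mem_univ, true_and, (e.prodCongr e).surjective.exists,
      Equiv.prodCongr_apply, Prod.map_fst, Prod.map_snd, hiso]
  rw [distVals, distVals, hvals]

lemma theta_image (hiso : ∀ x y, d' (e x) (e y) = d x y) (α t : ℝ) :
    theta d' α t = Set.image e '' theta d α t := by
  rw [theta, theta, distVals_congr e hiso, ← singletons_image e]
  exact List.foldl_hom _ fun P s => mergeStep_image e α s P hiso

lemma thetaStar_image (hiso : ∀ x y, d' (e x) (e y) = d x y) (α t : ℝ) :
    thetaStar d' α t = Set.image e '' thetaStar d α t := by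
  rw [thetaStar, thetaStar, distVals_congr e hiso, ← singletons_image e]
  exact List.foldl_hom _ fun P s => mergeStepStar_image e α s P hiso

lemma uAlpha_congr (hiso : ∀ x y, d' (e x) (e y) = d x y) (α : ℝ) (x y : X) :
    uAlpha d' α (e x) (e y) = uAlpha d α x y := by
  simp only [uAlpha, theta_image e hiso, exists_image_block_iff]

lemma uStar_congr (hiso : ∀ x y, d' (e x) (e y) = d x y) (α : ℝ) (x y : X) :
    uStar d' α (e x) (e y) = uStar d α x y := by
  simp only [uStar, thetaStar_image e hiso, exists_image_block_iff]

end Dendrogram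

theorem SLalpha_permutation_invariant_general {X X' : Type} [Fintype X] [Fintype X']
    (d : X → X → ℝ) (d' : X' → X' → ℝ)
    (φ : X → X') (hφ : Function.Bijective φ)
    (hiso : ∀ x y, d' (φ x) (φ y) = d x y) (α : ℝ) :
    (∀ x y, uAlpha d' α (φ x) (φ y) = uAlpha d α x y) ∧
    (∀ x y, uStar d' α (φ x) (φ y) = uStar d α x y) :=
  let e := Equiv.ofBijective φ hφ
  ⟨uAlpha_congr e hiso α, uStar_congr e hiso α⟩

theorem SLalpha_permutation_invariant {X X' : Type} [Fintype X] [Fintype X']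
    (d : X → X → ℝ) (d' : X' → X' → ℝ) (hd : IsMetric d) (hd' : IsMetric d')
    (φ : X → X') (hφ : Function.Bijective φ)
    (hiso : ∀ x y, d' (φ x) (φ y) = d x y) (α : ℝ) (hα : 0 < α) :
    (∀ x y, uAlpha d' α (φ x) (φ y) = uAlpha d α x y) ∧
    (∀ x y, uStar d' α (φ x) (φ y) = uStar d α x y) :=
  SLalpha_permutation_invariant_general d d' φ hφ hiso α
end

section
/- Let (X,d) be a finite metric space with n points. If α ≥ (n−2)/2, then SL(α) coincides with single linkage: θ_α(t) = θ_SL(t) for all t ≥ 0, and consequently u_α(x,y) = u_SL(x,y) for all x,y ∈ X. -/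
open Relation

/-! Once `α ≥ (n - 2)/2`, any two distinct blocks `B, B'` of the current partition containing
points `x, y` with `d x y ≤ t` are adjacent in `G_α^t`: the pair `{x, y}` is a witness for
condition (ii), because `min (dim F_t B) (dim F_t B') ≤ (#B + #B')/2 - 1 ≤ (n - 2)/2`.
So every merging step of SL(α) is a merging step of single linkage, and by induction along the
sorted distance values, starting from the singletons `θ_SL(0)`, the two dendrograms agree. -/

lemma List.foldl_max_le_iff {α : Type*} [LinearOrder α] {t : α} :
    ∀ {L : List α} {r : α}, L.foldl max r ≤ t ↔ r ≤ t ∧ ∀ s ∈ L, s ≤ t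
  | [], _ => by simp
  | a :: L, r => by
    simp only [List.foldl_cons, List.foldl_max_le_iff, max_le_iff, List.forall_mem_cons, and_assoc]

lemma List.foldl_eq_apply_foldl_max {α β : Type*} [LinearOrder α] (F : α → β) (g : β → α → β)
    (hg : ∀ r s, r ≤ s → g (F r) s = F s) :
    ∀ {L : List α} {r : α}, L.Pairwise (· ≤ ·) → (∀ s ∈ L, r ≤ s) →
      L.foldl g (F r) = F (L.foldl max r)
  | [], _, _, _ => rfl
  | a :: L, r, hL, hr => by
    have hra : r ≤ a := hr a List.mem_cons_self
    rw [List.foldl_cons, List.foldl_cons, hg r a hra, max_eq_right hra]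
    exact List.foldl_eq_apply_foldl_max F g hg hL.of_cons (List.pairwise_cons.mp hL).1

section SingleLinkage

variable {X : Type} {d : X → X → ℝ}

def chainBlock (d : X → X → ℝ) (r : ℝ) (x : X) : Set X := { y | HasChain d r x y }

lemma chainBlock_mem_thetaSL (r : ℝ) (x : X) : chainBlock d r x ∈ thetaSL d r := ⟨x, rfl⟩

lemma mem_chainBlock_self (r : ℝ) (x : X) : x ∈ chainBlock d r x := ReflTransGen.refl

lemma HasChain.mono {r s : ℝ} (hrs : r ≤ s) {x y : X} (h : HasChain d r x y) :
    HasChain d s x y :=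
  ReflTransGen.mono (fun _ _ hab => hab.trans hrs) _ _ h

lemma HasChain.symm (hd : IsMetric d) {r : ℝ} {x y : X} (h : HasChain d r x y) :
    HasChain d r y x :=
  ReflTransGen.mono (fun a b hab => by rwa [hd.2.2.1]) _ _ (ReflTransGen.swap _ _ h)

lemma eq_chainBlock_of_mem (hd : IsMetric d) {r : ℝ} {B : Set X} {x : X}
    (hB : B ∈ thetaSL d r) (hx : x ∈ B) : B = chainBlock d r x := by
  obtain ⟨z, rfl⟩ := hB
  ext y
  exact ⟨fun hzy => (HasChain.symm hd hx).trans hzy, fun hxy => ReflTransGen.trans hx hxy⟩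

lemma hasChain_of_mem_thetaSL (hd : IsMetric d) {r : ℝ} {B : Set X} (hB : B ∈ thetaSL d r)
    {x y : X} (hx : x ∈ B) (hy : y ∈ B) : HasChain d r x y := by
  rw [eq_chainBlock_of_mem hd hB hx] at hy
  exact hy

lemma disjoint_of_mem_thetaSL (hd : IsMetric d) {r : ℝ} {B B' : Set X}
    (hB : B ∈ thetaSL d r) (hB' : B' ∈ thetaSL d r) (hne : B ≠ B') : Disjoint B B' :=
  Set.disjoint_left.mpr fun _ hx hx' =>
    hne ((eq_chainBlock_of_mem hd hB hx).trans (eq_chainBlock_of_mem hd hB' hx').symm)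

lemma exists_mem_thetaSL_iff (hd : IsMetric d) {r : ℝ} {x y : X} :
    (∃ B ∈ thetaSL d r, x ∈ B ∧ y ∈ B) ↔ HasChain d r x y :=
  ⟨fun ⟨_, hB, hx, hy⟩ => hasChain_of_mem_thetaSL hd hB hx hy,
    fun h => ⟨chainBlock d r x, chainBlock_mem_thetaSL r x, mem_chainBlock_self r x, h⟩⟩

lemma thetaSL_congr {r s : ℝ} (h : ∀ a b : X, d a b ≤ r ↔ d a b ≤ s) :
    thetaSL d r = thetaSL d s := by
  have hrel : (fun a b => d a b ≤ r) = (fun a b => d a b ≤ s) := by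
    ext a b; exact h a b
  simp only [thetaSL, HasChain, hrel]

lemma singletons_eq_thetaSL_zero (hd : IsMetric d) : singletons X = thetaSL d 0 := by
  have hrel : (fun a b : X => d a b ≤ 0) = Eq := by
    ext a b
    rw [← hd.2.1]
    exact ⟨fun h => le_antisymm h (hd.1 a b), le_of_eq⟩
  have hblock : ∀ x : X, { y | HasChain d 0 x y } = {x} := by
    intro x
    ext y
    simp only [HasChain, hrel, reflTransGen_eq_self, Set.mem_ofPred_eq, Set.mem_singleton_iff,
      eq_comm]
  simp only [singletons, thetaSL, hblock]

end SingleLinkage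

section LargeAlpha

variable {X : Type} {d : X → X → ℝ}

lemma dimF_le_ncard_sub_one (d : X → X → ℝ) (t : ℝ) {B : Set X} (hB : B.Finite) :
    dimF d t B ≤ (B.ncard : ℝ) - 1 := by
  refine csSup_le ⟨-1, ∅, by simp, by simp, by simp⟩ ?_
  rintro v ⟨S, hS, -, rfl⟩
  have hcard : S.card ≤ B.ncard := by
    rw [← Set.ncard_coe_finset]
    exact Set.ncard_le_ncard hS hB
  have : (S.card : ℝ) ≤ B.ncard := by exact_mod_cast hcard
  linarith

lemma min_dimF_le_of_disjoint [Fintype X] (d : X → X → ℝ) (t : ℝ) {B B' : Set X}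
    (hBB' : Disjoint B B') :
    min (dimF d t B) (dimF d t B') ≤ ((Fintype.card X : ℝ) - 2) / 2 := by
  have hcard : B.ncard + B'.ncard ≤ Fintype.card X := by
    rw [← Set.ncard_union_eq hBB', ← Nat.card_eq_fintype_card, ← Set.ncard_univ]
    exact Set.ncard_le_ncard (Set.subset_univ _)
  have hcard' : (B.ncard : ℝ) + B'.ncard ≤ Fintype.card X := by exact_mod_cast hcard
  have h₁ := dimF_le_ncard_sub_one d t B.toFinite
  have h₂ := dimF_le_ncard_sub_one d t B'.toFinite
  have := min_le_left (dimF d t B) (dimF d t B')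
  have := min_le_right (dimF d t B) (dimF d t B')
  linarith

lemma isEdge_of_dist_le [Fintype X] (hd : IsMetric d) {α : ℝ}
    (hn : ((Fintype.card X : ℝ) - 2) / 2 ≤ α) {s : ℝ} {P : Set (Set X)} {B B' : Set X}
    (hB : B ∈ P) (hB' : B' ∈ P) (hne : B ≠ B') (hBB' : Disjoint B B')
    {x y : X} (hx : x ∈ B) (hy : y ∈ B') (hxy : d x y ≤ s) :
    IsEdge d α s P B B' := by
  classical
  have hxny : x ≠ y := fun h => Set.disjoint_left.mp hBB' hx (h ▸ hy)
  have hself : ∀ z, d z z ≤ s := fun z => ((hd.2.1 z z).mpr rfl).le.trans ((hd.1 x y).trans hxy)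
  have hcard : (({x, y} : Finset X).card : ℝ) - 1 = 1 := by
    rw [Finset.card_pair hxny]; norm_num
  refine ⟨hB, hB', hne, ⟨x, hx, y, hy, hxy⟩, {x, y}, ?_, ⟨x, by simp, hx⟩, ⟨y, by simp, hy⟩,
    ?_, ?_⟩
  · rw [Finset.coe_pair, Set.insert_subset_iff, Set.singleton_subset_iff]
    exact ⟨Or.inl hx, Or.inr hy⟩
  · simp only [Finset.mem_insert, Finset.mem_singleton, forall_eq_or_imp, forall_eq]
    exact ⟨⟨hself x, hxy⟩, hd.2.2.1 y x ▸ hxy, hself y⟩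
  · rw [hcard, mul_one]
    exact (min_dimF_le_of_disjoint d s hBB').trans hn

end LargeAlpha

section MergeStep

variable {X : Type} {d : X → X → ℝ}

lemma hasChain_of_isEdge (hd : IsMetric d) {α r s : ℝ} (hrs : r ≤ s) {B B' : Set X}
    (h : IsEdge d α s (thetaSL d r) B B') {a b : X} (ha : a ∈ B) (hb : b ∈ B') :
    HasChain d s a b := by
  obtain ⟨hB, hB', -, ⟨x, hx, y, hy, hxy⟩, -⟩ := h
  exact (((hasChain_of_mem_thetaSL hd hB ha hx).mono hrs).tail hxy).trans
    ((hasChain_of_mem_thetaSL hd hB' hy hb).mono hrs)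

lemma hasChain_of_sameComp (hd : IsMetric d) {α r s : ℝ} (hrs : r ≤ s) {B B' : Set X}
    (hB : B ∈ thetaSL d r) (h : SameComp d α s (thetaSL d r) B B') {a b : X} (ha : a ∈ B)
    (hb : b ∈ B') : HasChain d s a b := by
  induction h generalizing b with
  | refl => exact (hasChain_of_mem_thetaSL hd hB ha hb).mono hrs
  | tail _ hedge ih =>
    obtain ⟨c, hc, -⟩ := hedge.2.2.2.1
    exact (ih hc).trans (hasChain_of_isEdge hd hrs hedge hc hb)

lemma exists_sameComp_of_hasChain [Fintype X] (hd : IsMetric d) {α : ℝ}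
    (hn : ((Fintype.card X : ℝ) - 2) / 2 ≤ α) {r s : ℝ} {x y : X} (h : HasChain d s x y) :
    ∃ B ∈ thetaSL d r, SameComp d α s (thetaSL d r) (chainBlock d r x) B ∧ y ∈ B := by
  induction h with
  | refl => exact ⟨_, chainBlock_mem_thetaSL r x, ReflTransGen.refl, mem_chainBlock_self r x⟩
  | @tail b c _ hbc ih =>
    obtain ⟨B, hB, hcomp, hb⟩ := ih
    by_cases hc : c ∈ B
    · exact ⟨B, hB, hcomp, hc⟩
    · have hC := chainBlock_mem_thetaSL (d := d) r c
      have hne : B ≠ chainBlock d r c := fun h => hc (h ▸ mem_chainBlock_self r c)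
      have hedge := isEdge_of_dist_le hd hn hB hC hne (disjoint_of_mem_thetaSL hd hB hC hne) hb
        (mem_chainBlock_self r c) hbc
      exact ⟨_, hC, hcomp.tail hedge, mem_chainBlock_self r c⟩

lemma mergeStep_thetaSL [Fintype X] (hd : IsMetric d) {α : ℝ}
    (hn : ((Fintype.card X : ℝ) - 2) / 2 ≤ α) {r s : ℝ} (hrs : r ≤ s) :
    mergeStep d α s (thetaSL d r) = thetaSL d s := by
  have hcomp : ∀ x : X,
      ⋃₀ { B | B ∈ thetaSL d r ∧ SameComp d α s (thetaSL d r) (chainBlock d r x) B } =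
        chainBlock d s x := by
    intro x
    ext y
    constructor
    · rintro ⟨B, ⟨-, hcomp⟩, hy⟩
      exact hasChain_of_sameComp hd hrs (chainBlock_mem_thetaSL r x) hcomp
        (mem_chainBlock_self r x) hy
    · intro hy
      obtain ⟨B, hB, hcomp, hyB⟩ := exists_sameComp_of_hasChain (r := r) hd hn hy
      exact ⟨B, ⟨hB, hcomp⟩, hyB⟩
  ext C
  constructor
  · rintro ⟨_, ⟨x, rfl⟩, rfl⟩
    exact ⟨x, hcomp x⟩
  · rintro ⟨x, rfl⟩
    exact ⟨_, chainBlock_mem_thetaSL r x, (hcomp x).symm⟩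

end MergeStep

lemma mem_distVals {X : Type} [Fintype X] {d : X → X → ℝ} {t v : ℝ} :
    v ∈ distVals d t ↔ (∃ a b, d a b = v) ∧ v ≤ t := by
  simp [distVals]

lemma theta_eq_thetaSL {X : Type} [Fintype X] {d : X → X → ℝ} (hd : IsMetric d) {α : ℝ}
    (hn : ((Fintype.card X : ℝ) - 2) / 2 ≤ α) {t : ℝ} (ht : 0 ≤ t) :
    theta d α t = thetaSL d t := by
  have hsorted : (distVals d t).Pairwise (· ≤ ·) := Finset.pairwise_sort _ _
  have hnonneg : ∀ s ∈ distVals d t, 0 ≤ s := by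
    intro s hs
    obtain ⟨⟨a, b, rfl⟩, -⟩ := mem_distVals.mp hs
    exact hd.1 a b
  rw [theta, singletons_eq_thetaSL_zero hd, List.foldl_eq_apply_foldl_max (thetaSL d) _
    (fun r s hrs => mergeStep_thetaSL hd hn hrs) hsorted hnonneg]
  refine thetaSL_congr fun a b => ⟨fun hab => ?_, fun hab => ?_⟩
  · exact hab.trans (List.foldl_max_le_iff.mpr ⟨ht, fun s hs => (mem_distVals.mp hs).2⟩)
  · exact (List.foldl_max_le_iff.mp le_rfl).2 _ (mem_distVals.mpr ⟨⟨a, b, rfl⟩, hab⟩)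

theorem SLalpha_eq_SL_of_large_alpha_general {X : Type} [Fintype X] (d : X → X → ℝ)
    (hd : IsMetric d) (α : ℝ)
    (hn : ((Fintype.card X : ℝ) - 2) / 2 ≤ α) :
    (∀ t : ℝ, 0 ≤ t → theta d α t = thetaSL d t) ∧
    (∀ x y, uAlpha d α x y = uSL d x y) := by
  have htheta : ∀ t : ℝ, 0 ≤ t → theta d α t = thetaSL d t := fun t ht =>
    theta_eq_thetaSL hd hn ht
  refine ⟨htheta, fun x y => ?_⟩
  unfold uAlpha uSL
  congr 1
  ext t
  exact and_congr_right fun ht => by rw [htheta t ht, exists_mem_thetaSL_iff hd]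

theorem SLalpha_eq_SL_of_large_alpha {X : Type} [Fintype X] (d : X → X → ℝ)
    (hd : IsMetric d) (α : ℝ) (hα : 0 < α)
    (hn : ((Fintype.card X : ℝ) - 2) / 2 ≤ α) :
    (∀ t : ℝ, 0 ≤ t → theta d α t = thetaSL d t) ∧
    (∀ x y, uAlpha d α x y = uSL d x y) :=
  SLalpha_eq_SL_of_large_alpha_general d hd α hn
end

section
/- SL(1) is not stable in the Gromov–Hausdorff sense: for every ε > 0 there exist an 8-point set X and two metrics d, d' on X such that d_GH((X,d),(X,d')) = ε/2, while the output ultrametrics u = u₁ of SL(1) applied to (X,d) and u' = u₁ of SL(1) applied to (X,d') satisfy d_GH((X,u),(X,u')) = (1+ε)/2. (Concretely, (X,d) is the path metric of the graph consisting of two 4-cycles joined by an edge x₀y₀ where every edge has length 1, and d' is the same except d'(x₀,y₀) = 1+ε; then u ≡ 1 off the diagonal, while u' equals 1 within each 4-cycle and 2+ε between the two 4-cycles.) -/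
open Relation

/-- A correspondence between `A` and `B`. -/
def IsCorrespondence {A B : Type} (R : Set (A × B)) : Prop :=
  (∀ a, ∃ b, (a, b) ∈ R) ∧ (∀ b, ∃ a, (a, b) ∈ R)

/-- The distortion of a correspondence. -/
noncomputable def distortion {A B : Type} (dA : A → A → ℝ) (dB : B → B → ℝ)
    (R : Set (A × B)) : ℝ :=
  sSup { v : ℝ | ∃ p ∈ R, ∃ q ∈ R, v = |dA p.1 q.1 - dB p.2 q.2| }

/-- The Gromov–Hausdorff distance: half the infimum over correspondences of the distortion. -/
noncomputable def ghDist {A B : Type} (dA : A → A → ℝ) (dB : B → B → ℝ) : ℝ :=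
  (1 / 2) * sInf { v : ℝ | ∃ R : Set (A × B), IsCorrespondence R ∧ v = distortion dA dB R }

/-! Take two copies of `K₄` joined by a bridge edge, all edges of length `1`, and lengthen the
bridge by `ε`. On singletons the first merge of SL(α) is single linkage, so for the unit metric
everything merges at scale `1` and `u ≡ 1`, while for the stretched metric the two cliques appear
as blocks at scale `1`. They then stay apart until scale `2 + ε`: each clique has Vietoris–Rips
dimension `3`, but below `2 + ε` a simplex meeting both cliques lies on the bridge, and SL(1)
needs one of dimension at least `3`; at `2 + ε` the five points `0, …, 4` form a `4`-simplex.
In both comparisons the identity correspondence is optimal: it distorts only pairs in different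
cliques, and a pair at the largest distance of the second space has no counterpart that far apart
in the first. -/

section Dendrogram

variable {X : Type} {d : X → X → ℝ} {α t : ℝ} {P : Set (Set X)}

lemma cast_card_le_ncard {S : Finset X} {Y : Set X} (hY : Y.Finite) (h : ↑S ⊆ Y) :
    (S.card : ℝ) ≤ Y.ncard := by
  rw [← Set.ncard_coe_finset]
  exact_mod_cast Set.ncard_le_ncard h hY

lemma dimF_le {Y : Set X} {n : ℝ}
    (h : ∀ S : Finset X, ↑S ⊆ Y → (∀ s ∈ S, ∀ s' ∈ S, d s s' ≤ t) → (S.card : ℝ) - 1 ≤ n) :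
    dimF d t Y ≤ n :=
  csSup_le ⟨-1, ∅, by simp⟩ fun _ ⟨S, hSY, hS, hv⟩ => hv ▸ h S hSY hS

lemma dimF_le_ncard_sub_one_s17 {Y : Set X} (hY : Y.Finite) : dimF d t Y ≤ Y.ncard - 1 :=
  dimF_le fun _ hSY _ => sub_le_sub_right (cast_card_le_ncard hY hSY) 1

lemma card_sub_one_le_dimF {Y : Set X} (hY : Y.Finite) {S : Finset X} (hSY : ↑S ⊆ Y)
    (hS : ∀ s ∈ S, ∀ s' ∈ S, d s s' ≤ t) : (S.card : ℝ) - 1 ≤ dimF d t Y :=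
  le_csSup ⟨Y.ncard - 1, fun _ ⟨_, hS'Y, _, hv⟩ =>
    hv ▸ sub_le_sub_right (cast_card_le_ncard hY hS'Y) 1⟩
    ⟨S, hSY, hS, rfl⟩

lemma IsEdge.symm (hd : ∀ x y, d x y = d y x) {B B' : Set X} (h : IsEdge d α t P B B') :
    IsEdge d α t P B' B := by
  obtain ⟨hB, hB', hne, ⟨x, hx, y, hy, hxy⟩, S, hS, hSB, hSB', hSt, hdim⟩ := h
  exact ⟨hB', hB, hne.symm, ⟨y, hy, x, hx, hd x y ▸ hxy⟩, S, Set.union_comm B B' ▸ hS, hSB',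
    hSB, hSt, min_comm (dimF d t B) _ ▸ hdim⟩

lemma SameComp.symm (hd : ∀ x y, d x y = d y x) {B B' : Set X} (h : SameComp d α t P B B') :
    SameComp d α t P B' B :=
  have : Std.Symm (IsEdge d α t P) := ⟨fun _ _ => IsEdge.symm hd⟩
  ReflTransGen.stdSymm.symm _ _ h

lemma mergeStep_eq_self (h : ∀ B B', ¬ IsEdge d α t P B B') : mergeStep d α t P = P := by
  have hcomp : ∀ B ∈ P, {B' | B' ∈ P ∧ SameComp d α t P B B'} = {B} := by
    refine fun B hB => Set.ext fun B' =>
      ⟨fun ⟨_, hBB'⟩ => ?_, fun hB' => ⟨hB' ▸ hB, hB' ▸ .refl⟩⟩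
    induction hBB' with
    | refl => rfl
    | tail _ hedge => exact absurd hedge (h _ _)
  ext C
  constructor
  · rintro ⟨B, hB, rfl⟩
    rwa [hcomp B hB, Set.sUnion_singleton]
  · exact fun hC => ⟨C, hC, by rw [hcomp C hC, Set.sUnion_singleton]⟩

lemma mergeStep_eq_singleton_sUnion (hP : P.Nonempty)
    (h : ∀ B ∈ P, ∀ B' ∈ P, SameComp d α t P B B') : mergeStep d α t P = {⋃₀ P} := by
  have hcomp : ∀ B ∈ P, {B' | B' ∈ P ∧ SameComp d α t P B B'} = P :=
    fun B hB => Set.ext fun B' => ⟨And.left, fun hB' => ⟨hB', h B hB B' hB'⟩⟩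
  obtain ⟨B₀, hB₀⟩ := hP
  ext C
  constructor
  · rintro ⟨B, hB, rfl⟩
    rw [hcomp B hB, Set.mem_singleton_iff]
  · rintro rfl
    exact ⟨B₀, hB₀, by rw [hcomp B₀ hB₀]⟩

lemma mergeStep_singleton (A : Set X) : mergeStep d α t {A} = {A} :=
  mergeStep_eq_self fun _ _ ⟨hB, hB', hne, _⟩ => hne (hB.trans hB'.symm)

lemma mergeStep_pair_of_not_isEdge (hd : ∀ x y, d x y = d y x) {A B : Set X}
    (h : ¬ IsEdge d α t {A, B} A B) : mergeStep d α t {A, B} = {A, B} := by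
  refine mergeStep_eq_self fun C C' hCC' => ?_
  obtain ⟨hC, hC', hne, -⟩ := id hCC'
  rcases hC with rfl | rfl <;> rcases hC' with rfl | rfl
  exacts [hne rfl, h hCC', h (hCC'.symm hd), hne rfl]

lemma mergeStep_pair_of_isEdge (hd : ∀ x y, d x y = d y x) {A B : Set X}
    (h : IsEdge d α t {A, B} A B) : mergeStep d α t {A, B} = {A ∪ B} := by
  rw [mergeStep_eq_singleton_sUnion ⟨A, .inl rfl⟩, Set.sUnion_pair]
  rintro C (rfl | rfl) C' (rfl | rfl)
  exacts [.refl, .single h, SameComp.symm hd (.single h), .refl]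

lemma exists_mem_mergeStep {B : Set X} (hB : B ∈ P) {x : X} (hx : x ∈ B) :
    ∃ C ∈ mergeStep d α t P, x ∈ C :=
  ⟨_, ⟨B, hB, rfl⟩, B, ⟨hB, .refl⟩, hx⟩

lemma exists_mem_singletons_iff {x y : X} :
    (∃ B ∈ singletons X, x ∈ B ∧ y ∈ B) ↔ x = y := by
  constructor
  · rintro ⟨_, ⟨z, rfl⟩, rfl, rfl⟩
    rfl
  · rintro rfl
    exact ⟨{x}, ⟨x, rfl⟩, rfl, rfl⟩

lemma foldl_mergeStep_eq_self {P : Set (Set X)} {l : List ℝ}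
    (h : ∀ s ∈ l, mergeStep d α s P = P) : l.foldl (fun P s => mergeStep d α s P) P = P := by
  induction l with
  | nil => rfl
  | cons s l ih =>
    rw [List.foldl_cons, h s List.mem_cons_self]
    exact ih fun s' hs' => h s' (List.mem_cons_of_mem s hs')

end Dendrogram

section SingleLinkage

variable {X : Type} {d : X → X → ℝ} {α t : ℝ}

lemma isEdge_singleton_singleton (hd : IsMetric d) (hα : 0 ≤ α) {x y : X} (hxy : x ≠ y)
    (h : d x y ≤ t) : IsEdge d α t (singletons X) {x} {y} := by
  classical
  have ht : 0 ≤ t := (hd.1 x y).trans h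
  refine ⟨⟨x, rfl⟩, ⟨y, rfl⟩, fun he => hxy (Set.singleton_eq_singleton_iff.mp he),
    ⟨x, rfl, y, rfl, h⟩, {x, y}, by simp [Set.insert_subset_iff], ⟨x, by simp, rfl⟩,
    ⟨y, by simp, rfl⟩, ?_, ?_⟩
  · have hself : ∀ z, d z z ≤ t := fun z => (hd.2.1 z z).mpr rfl ▸ ht
    simp only [Finset.mem_insert, Finset.mem_singleton]
    rintro _ (rfl | rfl) _ (rfl | rfl)
    exacts [hself _, h, hd.2.2.1 _ _ ▸ h, hself _]
  · rw [Finset.card_pair hxy]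
    calc min (dimF d t {x}) (dimF d t {y}) ≤ dimF d t {x} := min_le_left _ _
      _ ≤ ({x} : Set X).ncard - 1 := dimF_le_ncard_sub_one_s17 (Set.finite_singleton x)
      _ ≤ α * ((2 : ℕ) - 1) := by norm_num [hα]

lemma sameComp_singleton_iff (hd : IsMetric d) (hα : 0 ≤ α) {x : X} {B : Set X} :
    SameComp d α t (singletons X) {x} B ↔ ∃ y, B = {y} ∧ HasChain d t x y := by
  constructor
  · intro h
    induction h with
    | refl => exact ⟨x, rfl, .refl⟩
    | tail _ hedge ih =>
      obtain ⟨y, rfl, hxy⟩ := ih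
      obtain ⟨-, ⟨z, rfl⟩, -, ⟨_, rfl, _, rfl, hyz⟩, -⟩ := hedge
      exact ⟨_, rfl, hxy.tail hyz⟩
  · rintro ⟨y, rfl, h⟩
    induction h with
    | refl => exact .refl
    | @tail y z _ hyz ih =>
      by_cases hne : y = z
      · exact hne ▸ ih
      · exact ih.tail (isEdge_singleton_singleton hd hα hne hyz)

lemma mergeStep_singletons (hd : IsMetric d) (hα : 0 ≤ α) :
    mergeStep d α t (singletons X) = thetaSL d t := by
  have hcomp : ∀ x, ⋃₀ {B | B ∈ singletons X ∧ SameComp d α t (singletons X) {x} B} =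
      {y | HasChain d t x y} := by
    intro x
    ext y
    simp only [Set.mem_sUnion, Set.mem_ofPred_eq, sameComp_singleton_iff hd hα]
    constructor
    · rintro ⟨_, ⟨-, z, rfl, hxz⟩, rfl⟩
      exact hxz
    · exact fun hxy => ⟨{y}, ⟨⟨y, rfl⟩, y, rfl, hxy⟩, rfl⟩
  ext C
  constructor
  · rintro ⟨_, ⟨x, rfl⟩, rfl⟩
    exact ⟨x, hcomp x⟩
  · rintro ⟨x, rfl⟩
    exact ⟨{x}, ⟨x, rfl⟩, (hcomp x).symm⟩

lemma hasChain_zero_iff (hd : IsMetric d) {x y : X} : HasChain d 0 x y ↔ x = y := by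
  refine ⟨fun h => ?_, fun h => h ▸ .refl⟩
  induction h with
  | refl => rfl
  | tail _ hyz ih => exact ih.trans ((hd.2.1 _ _).mp (le_antisymm hyz (hd.1 _ _)))

lemma mergeStep_zero_singletons (hd : IsMetric d) (hα : 0 ≤ α) :
    mergeStep d α 0 (singletons X) = singletons X := by
  rw [mergeStep_singletons hd hα]
  ext C
  simp only [thetaSL, singletons, hasChain_zero_iff hd, Set.mem_ofPred_eq]
  exact exists_congr fun x => by rw [show {y | x = y} = {x} from Set.ext fun _ => eq_comm]

end SingleLinkage

section Theta

variable {X : Type} [Fintype X] {d : X → X → ℝ} {α t : ℝ}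

lemma distVals_eq_filter {l : List ℝ} (hl : l.Pairwise (· < ·))
    (hmem : ∀ v, v ∈ l ↔ ∃ x y, d x y = v) (t : ℝ) : distVals d t = l.filter (· ≤ t) := by
  have hlt : (l.filter (· ≤ t)).Pairwise (· < ·) := hl.filter _
  have hfilter : (Finset.image (fun p : X × X => d p.1 p.2) Finset.univ).filter (· ≤ t) =
      (l.filter (· ≤ t)).toFinset := by
    ext v
    simp [hmem]
  rw [distVals, hfilter, List.toFinset_sort _ hlt.nodup]
  exact hlt.imp le_of_lt

lemma theta_eq_of_append {l₁ l₂ : List ℝ} {P : Set (Set X)}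
    (hl : (l₁ ++ l₂).Pairwise (· < ·))
    (hmem : ∀ v, v ∈ l₁ ++ l₂ ↔ ∃ x y, d x y = v) (hl₁ : ∀ s ∈ l₁, s ≤ t)
    (hP : l₁.foldl (fun P s => mergeStep d α s P) (singletons X) = P)
    (hl₂ : ∀ s ∈ l₂, s ≤ t → mergeStep d α s P = P) : theta d α t = P := by
  rw [theta, distVals_eq_filter hl hmem, List.filter_append,
    List.filter_eq_self.mpr (by simpa using hl₁), List.foldl_append, hP]
  exact foldl_mergeStep_eq_self fun s hs => by
    rw [List.mem_filter, decide_eq_true_iff] at hs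
    exact hl₂ s hs.1 hs.2

lemma exists_mem_theta (x : X) : ∃ B ∈ theta d α t, x ∈ B := by
  suffices ∀ (l : List ℝ) (P : Set (Set X)), (∃ B ∈ P, x ∈ B) →
      ∃ B ∈ l.foldl (fun P s => mergeStep d α s P) P, x ∈ B from
    this _ _ ⟨{x}, ⟨x, rfl⟩, rfl⟩
  intro l
  induction l with
  | nil => exact fun _ h => h
  | cons s l ih =>
    rintro P ⟨B, hB, hx⟩
    exact ih _ (exists_mem_mergeStep hB hx)

lemma uAlpha_eq_of_iff {x y : X} {r : ℝ} (hr : 0 ≤ r)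
    (h : ∀ t, 0 ≤ t → ((∃ B ∈ theta d α t, x ∈ B ∧ y ∈ B) ↔ r ≤ t)) : uAlpha d α x y = r := by
  have : {t | 0 ≤ t ∧ ∃ B ∈ theta d α t, x ∈ B ∧ y ∈ B} = Set.Ici r :=
    Set.ext fun t => ⟨fun ⟨ht, hB⟩ => (h t ht).mp hB,
      fun (hrt : r ≤ t) => ⟨hr.trans hrt, (h t (hr.trans hrt)).mpr hrt⟩⟩
  rw [uAlpha, this, csInf_Ici]

lemma uAlpha_self (x : X) : uAlpha d α x x = 0 :=
  uAlpha_eq_of_iff le_rfl fun _ ht =>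
    iff_of_true (let ⟨B, hB, hx⟩ := exists_mem_theta x; ⟨B, hB, hx, hx⟩) ht

end Theta

section GromovHausdorff

variable {A B : Type} {dA : A → A → ℝ} {dB : B → B → ℝ} {R : Set (A × B)}

lemma le_distortion [Finite A] [Finite B] {p q : A × B} (hp : p ∈ R) (hq : q ∈ R) :
    |dA p.1 q.1 - dB p.2 q.2| ≤ distortion dA dB R := by
  refine le_csSup ((Set.finite_range fun pq : (A × B) × (A × B) =>
    |dA pq.1.1 pq.2.1 - dB pq.1.2 pq.2.2|).bddAbove.mono ?_) ⟨p, hp, q, hq, rfl⟩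
  rintro _ ⟨p', -, q', -, rfl⟩
  exact ⟨(p', q'), rfl⟩

lemma distortion_le (hR : R.Nonempty) {c : ℝ}
    (h : ∀ p ∈ R, ∀ q ∈ R, |dA p.1 q.1 - dB p.2 q.2| ≤ c) : distortion dA dB R ≤ c :=
  let ⟨p, hp⟩ := hR
  csSup_le ⟨_, p, hp, p, hp, rfl⟩ fun _ ⟨p, hp, q, hq, hv⟩ => hv ▸ h p hp q hq

lemma ghDist_eq_of_diagonal {X : Type} [Finite X] {dA dB : X → X → ℝ} {c : ℝ} (a b : X)
    (hle : ∀ x y, |dA x y - dB x y| ≤ c) (hab : |dA a b - dB a b| = c)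
    (hfar : ∀ x y, c ≤ |dA x y - dB a b|) : ghDist dA dB = c / 2 := by
  have hdiag : IsCorrespondence (Set.diagonal X) := ⟨fun x => ⟨x, rfl⟩, fun y => ⟨y, rfl⟩⟩
  have hleast : IsLeast {v | ∃ R, IsCorrespondence R ∧ v = distortion dA dB R} c := by
    refine ⟨⟨_, hdiag, le_antisymm ?_ ?_⟩, ?_⟩
    · exact hab ▸ le_distortion (p := (a, a)) (q := (b, b)) rfl rfl
    · refine distortion_le ⟨(a, a), Set.mem_diagonal a⟩ ?_
      rintro ⟨x, x'⟩ (rfl : x = x') ⟨y, y'⟩ (rfl : y = y')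
      exact hle x y
    · rintro _ ⟨R, hR, rfl⟩
      obtain ⟨x, hx⟩ := hR.2 a
      obtain ⟨y, hy⟩ := hR.2 b
      exact (hfar x y).trans (le_distortion hx hy)
  rw [ghDist, hleast.csInf_eq]
  ring

end GromovHausdorff

namespace TwoCliques

def half : Set (Fin 8) := {i | (i : ℕ) < 4}

instance : DecidablePred (· ∈ half) := fun i => inferInstanceAs (Decidable ((i : ℕ) < 4))

def hubDist (i : Fin 8) : ℕ := if i = 0 ∨ i = 4 then 0 else 1

/-- The path metric of two copies of `K₄`, on `half` and on `halfᶜ`, joined by the edge `0 — 4`. -/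
def graphDist (i j : Fin 8) : ℕ :=
  if i = j then 0 else if (i ∈ half ↔ j ∈ half) then 1 else 1 + hubDist i + hubDist j

def hub (i : Fin 8) : Fin 8 := if i ∈ half then 0 else 4

def crossing (i j : Fin 8) : ℕ := if (i ∈ half ↔ j ∈ half) then 0 else 1

/-- `graphDist` with the edge `0 — 4` lengthened to `1 + ε`. -/
noncomputable def bridgeDist (ε : ℝ) (i j : Fin 8) : ℝ := graphDist i j + ε * crossing i j

lemma graphDist_eq_zero_iff : ∀ i j, graphDist i j = 0 ↔ i = j := by decide
lemma graphDist_comm : ∀ i j, graphDist i j = graphDist j i := by decide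
lemma graphDist_triangle : ∀ i j k, graphDist i k ≤ graphDist i j + graphDist j k := by decide
lemma graphDist_le_three : ∀ i j, graphDist i j ≤ 3 := by decide
lemma graphDist_le_one_of_iff : ∀ i j, (i ∈ half ↔ j ∈ half) → graphDist i j ≤ 1 := by decide
lemma eq_hub_of_graphDist_le_one :
    ∀ i j, ¬(i ∈ half ↔ j ∈ half) → graphDist i j ≤ 1 → i = 0 ∨ i = 4 := by decide
lemma graphDist_crossing_mem :
    ∀ i j, (graphDist i j, crossing i j) ∈ [(0, 0), (1, 0), (1, 1), (2, 1), (3, 1)] := by decide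
lemma graphDist_hub_le_one : ∀ i, graphDist i (hub i) ≤ 1 := by decide
lemma graphDist_hub_hub_le_one : ∀ i j, graphDist (hub i) (hub j) ≤ 1 := by decide
lemma crossing_comm : ∀ i j, crossing i j = crossing j i := by decide
lemma crossing_triangle : ∀ i j k, crossing i k ≤ crossing i j + crossing j k := by decide
lemma crossing_le_one : ∀ i j, crossing i j ≤ 1 := by decide

variable {ε : ℝ}

lemma bridgeDist_comm (ε : ℝ) (i j : Fin 8) : bridgeDist ε i j = bridgeDist ε j i := by
  rw [bridgeDist, bridgeDist, graphDist_comm, crossing_comm]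

lemma isMetric_bridgeDist (hε : 0 ≤ ε) : IsMetric (bridgeDist ε) := by
  refine ⟨fun i j => by unfold bridgeDist; positivity, fun i j => ⟨fun h => ?_, ?_⟩,
    bridgeDist_comm ε, fun i j k => ?_⟩
  · have h := ((add_eq_zero_iff_of_nonneg (by positivity) (by positivity)).mp h).1
    exact (graphDist_eq_zero_iff i j).mp (by exact_mod_cast h)
  · rintro rfl
    simp [bridgeDist, crossing, (graphDist_eq_zero_iff i i).mpr rfl]
  · have hg : (graphDist i k : ℝ) ≤ graphDist i j + graphDist j k := by
      exact_mod_cast graphDist_triangle i j k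
    have hc : (crossing i k : ℝ) ≤ crossing i j + crossing j k := by
      exact_mod_cast crossing_triangle i j k
    unfold bridgeDist
    nlinarith

lemma mem_values_iff (ε v : ℝ) :
    v ∈ [0, 1, 1 + ε, 2 + ε, 3 + ε] ↔ ∃ i j, bridgeDist ε i j = v := by
  constructor
  · simp only [List.mem_cons, List.not_mem_nil, or_false]
    rintro (rfl | rfl | rfl | rfl | rfl)
    exacts [⟨0, 0, by simp +decide [bridgeDist, graphDist, crossing]⟩,
      ⟨0, 1, by simp +decide [bridgeDist, graphDist, crossing]⟩,
      ⟨0, 4, by simp +decide [bridgeDist, graphDist, crossing, hubDist]⟩,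
      ⟨1, 4, by simp +decide [bridgeDist, graphDist, crossing, hubDist, add_comm]⟩,
      ⟨1, 5, by norm_num +decide [bridgeDist, graphDist, crossing, hubDist, add_comm]⟩]
  · rintro ⟨i, j, rfl⟩
    have := graphDist_crossing_mem i j
    simp only [List.mem_cons, List.not_mem_nil, or_false, Prod.ext_iff] at this
    rcases this with ⟨hg, hc⟩ | ⟨hg, hc⟩ | ⟨hg, hc⟩ | ⟨hg, hc⟩ | ⟨hg, hc⟩ <;>
      simp [bridgeDist, hg, hc]

lemma mem_values_zero_iff (v : ℝ) : v ∈ [0, 1, 2, 3] ↔ ∃ i j, bridgeDist 0 i j = v := by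
  rw [← mem_values_iff]
  simp

lemma values_pairwise (hε : 0 < ε) : [0, 1, 1 + ε, 2 + ε, 3 + ε].Pairwise (· < ·) := by
  simp only [List.pairwise_cons, List.mem_cons, List.not_mem_nil, or_false, forall_eq_or_imp,
    forall_eq, List.Pairwise.nil, IsEmpty.forall_iff, implies_true, and_true]
  and_intros <;> linarith

lemma bridgeDist_le_one {i j : Fin 8} (h : i ∈ half ↔ j ∈ half) : bridgeDist ε i j ≤ 1 := by
  simp only [bridgeDist, crossing, if_pos h, Nat.cast_zero, mul_zero, add_zero]
  exact_mod_cast graphDist_le_one_of_iff i j h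

lemma bridgeDist_of_not_iff {i j : Fin 8} (h : ¬(i ∈ half ↔ j ∈ half)) :
    bridgeDist ε i j = graphDist i j + ε := by
  simp [bridgeDist, crossing, if_neg h]

lemma one_lt_bridgeDist (hε : 0 < ε) {i j : Fin 8} (h : ¬(i ∈ half ↔ j ∈ half)) :
    1 < bridgeDist ε i j := by
  have hij : i ≠ j := fun hij => h (hij ▸ Iff.rfl)
  have : (1 : ℝ) ≤ graphDist i j :=
    Nat.one_le_cast.mpr (Nat.one_le_iff_ne_zero.mpr (mt (graphDist_eq_zero_iff i j).mp hij))
  rw [bridgeDist_of_not_iff h]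
  linarith

lemma hasChain_one_iff (hε : 0 < ε) {i j : Fin 8} :
    HasChain (bridgeDist ε) 1 i j ↔ (i ∈ half ↔ j ∈ half) := by
  refine ⟨fun h => ?_, fun h => .single (bridgeDist_le_one h)⟩
  induction h with
  | refl => rfl
  | tail _ hkl ih => exact ih.trans (not_not.mp fun h => (one_lt_bridgeDist hε h).not_ge hkl)

lemma hasChain_zero_one (i j : Fin 8) : HasChain (bridgeDist 0) 1 i j := by
  have hle : ∀ i j, graphDist i j ≤ 1 → bridgeDist 0 i j ≤ 1 := fun i j h => by
    simpa [bridgeDist] using (Nat.cast_le.mpr h : (graphDist i j : ℝ) ≤ (1 : ℕ))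
  refine .tail (.tail (.single (hle _ _ (graphDist_hub_le_one i)))
    (hle _ _ (graphDist_hub_hub_le_one i j))) (hle _ _ ?_)
  rw [graphDist_comm]
  exact graphDist_hub_le_one j

lemma thetaSL_one (hε : 0 < ε) : thetaSL (bridgeDist ε) 1 = {half, halfᶜ} := by
  have hhalf : ∀ i, {j | i ∈ half ↔ j ∈ half} = if i ∈ half then half else halfᶜ := by
    intro i
    split_ifs with hi <;> ext j <;> simp [hi]
  ext C
  simp only [thetaSL, hasChain_one_iff hε, hhalf, Set.mem_ofPred_eq, Set.mem_insert_iff,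
    Set.mem_singleton_iff]
  constructor
  · rintro ⟨i, rfl⟩
    split_ifs <;> simp
  · rintro (rfl | rfl)
    exacts [⟨0, (if_pos (by decide)).symm⟩, ⟨4, (if_neg (by decide)).symm⟩]

lemma thetaSL_zero_one : thetaSL (bridgeDist 0) 1 = {Set.univ} := by
  ext C
  simp [thetaSL, hasChain_zero_one]

lemma ncard_of_mem_halves {B : Set (Fin 8)} (hB : B ∈ ({half, halfᶜ} : Set (Set (Fin 8)))) :
    B.ncard = 4 := by
  rcases hB with rfl | rfl <;> rw [Set.ncard_eq_toFinset_card'] <;> decide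

lemma three_le_dimF {s : ℝ} (hs : 1 ≤ s) {B : Set (Fin 8)}
    (hB : B ∈ ({half, halfᶜ} : Set (Set (Fin 8)))) : 3 ≤ dimF (bridgeDist ε) s B := by
  have hside : ∀ i ∈ B, ∀ j ∈ B, i ∈ half ↔ j ∈ half := by
    rcases hB with rfl | rfl <;> intro i hi j hj <;> simp_all
  obtain ⟨S, rfl⟩ : ∃ S : Finset (Fin 8), ↑S = B := ⟨(Set.toFinite B).toFinset, by simp⟩
  have hcard : (S.card : ℝ) = 4 := by
    exact_mod_cast (Set.ncard_coe_finset S) ▸ ncard_of_mem_halves hB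
  have := card_sub_one_le_dimF (d := bridgeDist ε) (Set.toFinite _) le_rfl
    fun i hi j hj => (bridgeDist_le_one (hside i hi j hj)).trans hs
  linarith

lemma dimF_le_three {s : ℝ} {B : Set (Fin 8)} (hB : B ∈ ({half, halfᶜ} : Set (Set (Fin 8)))) :
    dimF (bridgeDist ε) s B ≤ 3 := by
  have := dimF_le_ncard_sub_one_s17 (d := bridgeDist ε) (t := s) (Set.toFinite B)
  rw [ncard_of_mem_halves hB] at this
  norm_num at this
  exact this

/-- Below scale `2 + ε` only the bridge `0 — 4` joins the two halves. -/
lemma card_le_two_of_clique {s : ℝ} (hs : s < 2 + ε) {S : Finset (Fin 8)}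
    (hS : ∀ i ∈ S, ∀ j ∈ S, bridgeDist ε i j ≤ s) {a b : Fin 8} (ha : a ∈ S) (hb : b ∈ S)
    (hab : ¬(a ∈ half ↔ b ∈ half)) : S.card ≤ 2 := by
  have hhub : ∀ i ∈ S, ∀ j ∈ S, ¬(i ∈ half ↔ j ∈ half) → i ∈ ({0, 4} : Finset (Fin 8)) := by
    intro i hi j hj hij
    have h := (hS i hi j hj).trans_lt hs
    rw [bridgeDist_of_not_iff hij, add_lt_add_iff_right] at h
    have : graphDist i j ≤ 1 := Nat.lt_succ_iff.mp (by exact_mod_cast h)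
    simpa using eq_hub_of_graphDist_le_one i j hij this
  have hsub : S ⊆ {0, 4} := fun i hi => by
    by_cases hia : i ∈ half ↔ a ∈ half
    · exact hhub i hi b hb fun hib => hab (hia.symm.trans hib)
    · exact hhub i hi a ha hia
  exact (Finset.card_le_card hsub).trans Finset.card_le_two

lemma mergeStep_halves_of_lt {s : ℝ} (h1 : 1 ≤ s) (h2 : s < 2 + ε) :
    mergeStep (bridgeDist ε) 1 s {half, halfᶜ} = {half, halfᶜ} := by
  refine mergeStep_pair_of_not_isEdge (bridgeDist_comm ε) ?_
  rintro ⟨-, -, -, -, S, -, ⟨a, haS, ha⟩, ⟨b, hbS, hb⟩, hS, hdim⟩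
  have hcard : (S.card : ℝ) ≤ 2 := by
    exact_mod_cast card_le_two_of_clique h2 hS haS hbS fun hab => hb (hab.mp ha)
  have := le_min (three_le_dimF (ε := ε) h1 (.inl rfl)) (three_le_dimF (ε := ε) h1 (.inr rfl))
  linarith

lemma mergeStep_halves (hε : 0 ≤ ε) :
    mergeStep (bridgeDist ε) 1 (2 + ε) {half, halfᶜ} = {Set.univ} := by
  rw [← Set.union_compl_self half]
  refine mergeStep_pair_of_isEdge (bridgeDist_comm ε) ⟨.inl rfl, .inr rfl, ?_,
    ⟨0, by decide, 4, by decide, ?_⟩, {0, 1, 2, 3, 4}, by simp, ⟨0, by simp, by decide⟩,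
    ⟨4, by simp, by decide⟩, fun i hi j hj => ?_, ?_⟩
  · exact ne_compl_self
  · rw [bridgeDist_of_not_iff (by decide)]
    norm_num [show graphDist 0 4 = 1 by decide]
  · have hg : graphDist i j ≤ 2 := by revert i j; decide
    have hg' : (graphDist i j : ℝ) ≤ 2 := by exact_mod_cast hg
    have hc : (crossing i j : ℝ) ≤ 1 := by exact_mod_cast crossing_le_one i j
    unfold bridgeDist
    nlinarith
  · calc min (dimF (bridgeDist ε) (2 + ε) half) (dimF (bridgeDist ε) (2 + ε) halfᶜ)
        ≤ dimF (bridgeDist ε) (2 + ε) half := min_le_left _ _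
      _ ≤ 3 := dimF_le_three (.inl rfl)
      _ ≤ 1 * ((({0, 1, 2, 3, 4} : Finset (Fin 8)).card : ℝ) - 1) := by
        rw [show ({0, 1, 2, 3, 4} : Finset (Fin 8)).card = 5 by decide]
        norm_num

lemma theta_zero_of_lt_one {t : ℝ} (h0 : 0 ≤ t) (h1 : t < 1) :
    theta (bridgeDist 0) 1 t = singletons (Fin 8) :=
  theta_eq_of_append (l₁ := [0]) (l₂ := [1, 2, 3]) (by norm_num) mem_values_zero_iff
    (by simpa using h0) (mergeStep_zero_singletons (isMetric_bridgeDist le_rfl) zero_le_one)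
    fun s hs hst => by
      simp only [List.mem_cons, List.not_mem_nil, or_false] at hs
      rcases hs with rfl | rfl | rfl <;> linarith

lemma theta_zero_of_one_le {t : ℝ} (h1 : 1 ≤ t) : theta (bridgeDist 0) 1 t = {Set.univ} := by
  have hd := isMetric_bridgeDist le_rfl
  refine theta_eq_of_append (l₁ := [0, 1]) (l₂ := [2, 3]) (by norm_num) mem_values_zero_iff
    (by simpa using ⟨by linarith, h1⟩) ?_ fun _ _ _ => mergeStep_singleton _
  rw [List.foldl_cons, List.foldl_cons, List.foldl_nil, mergeStep_zero_singletons hd zero_le_one,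
    mergeStep_singletons hd zero_le_one, thetaSL_zero_one]

lemma theta_of_lt_one (hε : 0 < ε) {t : ℝ} (h0 : 0 ≤ t) (h1 : t < 1) :
    theta (bridgeDist ε) 1 t = singletons (Fin 8) :=
  theta_eq_of_append (l₁ := [0]) (l₂ := [1, 1 + ε, 2 + ε, 3 + ε]) (values_pairwise hε)
    (mem_values_iff ε) (by simpa using h0)
    (mergeStep_zero_singletons (isMetric_bridgeDist hε.le) zero_le_one)
    fun s hs hst => by
      simp only [List.mem_cons, List.not_mem_nil, or_false] at hs
      rcases hs with rfl | rfl | rfl | rfl <;> linarith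

lemma theta_of_mem_Ico (hε : 0 < ε) {t : ℝ} (h1 : 1 ≤ t) (h2 : t < 2 + ε) :
    theta (bridgeDist ε) 1 t = {half, halfᶜ} := by
  have hd := isMetric_bridgeDist hε.le
  refine theta_eq_of_append (l₁ := [0, 1]) (l₂ := [1 + ε, 2 + ε, 3 + ε]) (values_pairwise hε)
    (mem_values_iff ε) (by simpa using ⟨by linarith, h1⟩) ?_ fun s hs hst => ?_
  · rw [List.foldl_cons, List.foldl_cons, List.foldl_nil,
      mergeStep_zero_singletons hd zero_le_one, mergeStep_singletons hd zero_le_one, thetaSL_one hε]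
  · simp only [List.mem_cons, List.not_mem_nil, or_false] at hs
    exact mergeStep_halves_of_lt (by rcases hs with rfl | rfl | rfl <;> linarith) (by linarith)

lemma theta_of_le (hε : 0 < ε) {t : ℝ} (h2 : 2 + ε ≤ t) :
    theta (bridgeDist ε) 1 t = {Set.univ} := by
  have hd := isMetric_bridgeDist hε.le
  refine theta_eq_of_append (l₁ := [0, 1, 1 + ε, 2 + ε]) (l₂ := [3 + ε]) (values_pairwise hε)
    (mem_values_iff ε) (by simp only [List.mem_cons, List.not_mem_nil, or_false,
      forall_eq_or_imp, forall_eq]; and_intros <;> linarith) ?_ fun _ _ _ => mergeStep_singleton _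
  rw [List.foldl_cons, List.foldl_cons, List.foldl_cons, List.foldl_cons, List.foldl_nil,
    mergeStep_zero_singletons hd zero_le_one, mergeStep_singletons hd zero_le_one, thetaSL_one hε,
    mergeStep_halves_of_lt (le_add_of_nonneg_right hε.le) (by linarith), mergeStep_halves hε.le]

lemma uAlpha_zero_of_ne {i j : Fin 8} (hij : i ≠ j) : uAlpha (bridgeDist 0) 1 i j = 1 :=
  uAlpha_eq_of_iff zero_le_one fun t ht => by
    rcases lt_or_ge t 1 with h1 | h1
    · rw [theta_zero_of_lt_one ht h1, exists_mem_singletons_iff]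
      exact iff_of_false hij h1.not_ge
    · rw [theta_zero_of_one_le h1]
      exact iff_of_true ⟨_, rfl, trivial, trivial⟩ h1

lemma uAlpha_zero_le_one (i j : Fin 8) : uAlpha (bridgeDist 0) 1 i j ≤ 1 := by
  rcases eq_or_ne i j with rfl | hij
  · exact (uAlpha_self i).trans_le zero_le_one
  · exact (uAlpha_zero_of_ne hij).le

lemma uAlpha_of_iff (hε : 0 < ε) {i j : Fin 8} (hij : i ≠ j) (h : i ∈ half ↔ j ∈ half) :
    uAlpha (bridgeDist ε) 1 i j = 1 :=
  uAlpha_eq_of_iff zero_le_one fun t ht => by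
    rcases lt_or_ge t 1 with h1 | h1
    · rw [theta_of_lt_one hε ht h1, exists_mem_singletons_iff]
      exact iff_of_false hij h1.not_ge
    refine iff_of_true ?_ h1
    rcases lt_or_ge t (2 + ε) with h2 | h2
    · rw [theta_of_mem_Ico hε h1 h2]
      by_cases hi : i ∈ half
      · exact ⟨half, .inl rfl, hi, h.mp hi⟩
      · exact ⟨halfᶜ, .inr rfl, hi, mt h.mpr hi⟩
    · rw [theta_of_le hε h2]
      exact ⟨_, rfl, trivial, trivial⟩

lemma uAlpha_of_not_iff (hε : 0 < ε) {i j : Fin 8} (h : ¬(i ∈ half ↔ j ∈ half)) :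
    uAlpha (bridgeDist ε) 1 i j = 2 + ε :=
  uAlpha_eq_of_iff (by linarith) fun t ht => by
    rcases lt_or_ge t (2 + ε) with h2 | h2
    · refine iff_of_false ?_ h2.not_ge
      rcases lt_or_ge t 1 with h1 | h1
      · rw [theta_of_lt_one hε ht h1, exists_mem_singletons_iff]
        exact fun hij => h (hij ▸ Iff.rfl)
      · rw [theta_of_mem_Ico hε h1 h2]
        rintro ⟨B, rfl | rfl, hi, hj⟩
        exacts [h (iff_of_true hi hj), h (iff_of_false hi hj)]
    · rw [theta_of_le hε h2]
      exact iff_of_true ⟨_, rfl, trivial, trivial⟩ h2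

lemma ghDist_bridgeDist (hε : 0 < ε) : ghDist (bridgeDist 0) (bridgeDist ε) = ε / 2 := by
  have hdiff : ∀ i j, |bridgeDist 0 i j - bridgeDist ε i j| = ε * crossing i j := fun i j => by
    have : bridgeDist ε i j - bridgeDist 0 i j = ε * crossing i j := by
      simp only [bridgeDist]
      ring
    rw [abs_sub_comm, this, abs_of_nonneg (by positivity)]
  refine ghDist_eq_of_diagonal 1 5 (fun i j => ?_) ?_ fun i j => ?_
  · rw [hdiff]
    exact mul_le_of_le_one_right hε.le (by exact_mod_cast crossing_le_one i j)
  · rw [hdiff, show crossing 1 5 = 1 by decide, Nat.cast_one, mul_one]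
  · have hi : bridgeDist 0 i j ≤ 3 := by
      simpa [bridgeDist] using
        (Nat.cast_le.mpr (graphDist_le_three i j) : (graphDist i j : ℝ) ≤ (3 : ℕ))
    rw [bridgeDist_of_not_iff (i := 1) (j := 5) (by decide), show graphDist 1 5 = 3 by decide,
      abs_sub_comm, abs_of_nonneg (by push_cast; linarith)]
    push_cast
    linarith

lemma ghDist_uAlpha_bridgeDist (hε : 0 < ε) :
    ghDist (uAlpha (bridgeDist 0) 1) (uAlpha (bridgeDist ε) 1) = (1 + ε) / 2 := by
  have h04 : ¬((0 : Fin 8) ∈ half ↔ (4 : Fin 8) ∈ half) := by decide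
  refine ghDist_eq_of_diagonal 0 4 (fun i j => ?_) ?_ fun i j => ?_
  · rcases eq_or_ne i j with rfl | hij
    · rw [uAlpha_self, uAlpha_self, sub_zero, abs_zero]
      linarith
    by_cases h : i ∈ half ↔ j ∈ half
    · rw [uAlpha_zero_of_ne hij, uAlpha_of_iff hε hij h, sub_self, abs_zero]
      linarith
    · rw [uAlpha_zero_of_ne hij, uAlpha_of_not_iff hε h, abs_sub_comm, abs_of_nonneg (by linarith)]
      linarith
  · rw [uAlpha_zero_of_ne (by decide), uAlpha_of_not_iff hε h04, abs_sub_comm,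
      abs_of_nonneg (by linarith)]
    ring
  · have hi := uAlpha_zero_le_one i j
    rw [uAlpha_of_not_iff hε h04, abs_sub_comm, abs_of_nonneg (by linarith)]
    linarith

end TwoCliques

theorem SLone_not_GH_stable (ε : ℝ) (hε : 0 < ε) :
    ∃ (X : Type) (iX : Fintype X) (d d' : X → X → ℝ),
      @Fintype.card X iX = 8 ∧ IsMetric d ∧ IsMetric d' ∧
      ghDist d d' = ε / 2 ∧
      ghDist (@uAlpha X iX d 1) (@uAlpha X iX d' 1) = (1 + ε) / 2 :=
  ⟨Fin 8, inferInstance, TwoCliques.bridgeDist 0, TwoCliques.bridgeDist ε, Fintype.card_fin 8,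
    TwoCliques.isMetric_bridgeDist le_rfl, TwoCliques.isMetric_bridgeDist hε.le,
    TwoCliques.ghDist_bridgeDist hε, TwoCliques.ghDist_uAlpha_bridgeDist hε⟩
end
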